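/- Let σ^target_{b|x} (b, x ∈ {0,1}) be a bipartite assemblage, i.e. positive semidefinite 2×2 complex matrices with ∑_b Tr[σ^target_{b|x}] = 1 for each x. Then the tripartite family σ^initial_{a,b|x,y} := (1/2) σ^target_{b| x ⊕ a ⊕ y} admits an LHS model: there exist a finite set Λ, weights P_λ ≥ 0 summing to 1, density matrices ϱ_λ, and numbers P(a,b|x,y,λ) ≥ 0 with ∑_{a,b} P(a,b|x,y,λ) = 1 for all x, y, λ, such that σ^initial_{a,b|x,y} = ∑_λ P_λ P(a,b|x,y,λ) ϱ_λ. (One may take Λ = {0,1}², P_{(λ₀,λ₁)} = (1/2)Tr[σ^target_{λ₀|λ₁}], ϱ_{(λ₀,λ₁)} = σ^target_{λ₀|λ₁}/Tr[σ^target_{λ₀|λ₁}] when the trace is nonzero, and P(a,b|x,y,(λ₀,λ₁)) = δ_{λ₀,b} δ_{λ₁, x⊕a⊕y}.) -/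

import Mathlib

open Matrix BigOperators ComplexOrder

noncomputable section

lemma psd_trace_nonneg {n : Type*} [Fintype n] [DecidableEq n]
    {M : Matrix n n ℂ} (h : M.PosSemidef) : 0 ≤ M.trace := by
  have hd : ∀ i, 0 ≤ M i i := by
    intro i
    simpa [dotProduct, mulVec, Pi.single_apply, Finset.mul_sum] using h.dotProduct_mulVec_nonneg (Pi.single i 1)
  exact Finset.sum_nonneg fun i _ => hd i

lemma psd_trace_real {n : Type*} [Fintype n] [DecidableEq n]
    {M : Matrix n n ℂ} (h : M.PosSemidef) : M.trace = (M.trace.re : ℂ) := by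
  have := psd_trace_nonneg h
  rw [Complex.nonneg_iff] at this
  exact Complex.ext rfl (by simp [this.2])

lemma psd_eq_zero_of_trace_zero {n : Type*} [Fintype n] [DecidableEq n]
    {M : Matrix n n ℂ} (h : M.PosSemidef) (ht : M.trace = 0) : M = 0 := by
  obtain ⟨B, rfl⟩ : ∃ B : Matrix n n ℂ, M = Bᴴ * B := by
    open scoped MatrixOrder Matrix.Norms.L2Operator in
    exact CStarAlgebra.nonneg_iff_eq_star_mul_self.mp h.nonneg
  have hB : B = 0 := by
    have h1 : (Bᴴ * B).trace = ∑ i, ∑ j, (Complex.normSq (B j i) : ℂ) := by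
      simp [Matrix.trace, Matrix.diag, Matrix.mul_apply, Matrix.conjTranspose_apply,
        Complex.normSq_eq_conj_mul_self]
    have h2 : ∑ i, ∑ j, (Complex.normSq (B j i) : ℝ) = 0 := by
      have := ht
      rw [h1] at this
      exact_mod_cast (by exact_mod_cast congrArg Complex.re this)
    ext j i
    have := (Finset.sum_eq_zero_iff_of_nonneg (fun i _ => Finset.sum_nonneg
      (fun j _ => Complex.normSq_nonneg _))).mp h2 i (Finset.mem_univ i)
    have := (Finset.sum_eq_zero_iff_of_nonneg (fun j _ => Complex.normSq_nonneg _)).mp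
      this j (Finset.mem_univ j)
    simpa using Complex.normSq_eq_zero.mp this
  simp [hB]

lemma psd_smul_real {n : Type*} [Fintype n] {M : Matrix n n ℂ} (h : M.PosSemidef)
    {c : ℝ} (hc : 0 ≤ c) : (c • M).PosSemidef := by
  have hcM : c • M = (c : ℂ) • M := by ext i j; simp [Complex.real_smul]
  rw [hcM]
  rw [Matrix.posSemidef_iff_dotProduct_mulVec]
  constructor
  · show ((c:ℂ) • M)ᴴ = _
    rw [Matrix.conjTranspose_smul, h.1.eq]
    simp [Complex.conj_ofReal]
  · intro x
    rw [Matrix.smul_mulVec, dotProduct_smul, smul_eq_mul]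
    exact mul_nonneg (by exact_mod_cast hc) (h.dotProduct_mulVec_nonneg x)

/-- A tripartite family `σ a b x y` (outputs `a,b`, inputs `x,y`) of 2×2 complex matrices
admits a local-hidden-state (LHS) model. -/
def IsLHS3 (σ : Fin 2 → Fin 2 → Fin 2 → Fin 2 → Matrix (Fin 2) (Fin 2) ℂ) : Prop :=
  ∃ (n : ℕ) (P : Fin n → ℝ) (ϱ : Fin n → Matrix (Fin 2) (Fin 2) ℂ)
    (q : Fin 2 → Fin 2 → Fin 2 → Fin 2 → Fin n → ℝ),
    (∀ l, 0 ≤ P l) ∧ (∑ l, P l = 1) ∧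
    (∀ l, (ϱ l).PosSemidef) ∧ (∀ l, (ϱ l).trace = 1) ∧
    (∀ a b x y l, 0 ≤ q a b x y l) ∧
    (∀ x y l, ∑ a, ∑ b, q a b x y l = 1) ∧
    (∀ a b x y, σ a b x y = ∑ l, (P l * q a b x y l) • ϱ l)

/-- The initial tripartite family `(1/2) σ^target_{b|x⊕a⊕y}` built from any bipartite
assemblage admits an LHS model. -/
theorem initial_assemblage_is_LHS
    (σt : Fin 2 → Fin 2 → Matrix (Fin 2) (Fin 2) ℂ)
    (hpsd : ∀ b x, (σt b x).PosSemidef)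
    (hnorm : ∀ x, ∑ b, (σt b x).trace = 1) :
    IsLHS3 (fun a b x y => (1 / 2 : ℝ) • σt b (x + a + y)) := by
  classical
  set t : Fin 2 → Fin 2 → ℝ := fun b x => ((σt b x).trace).re with ht_def
  have htr : ∀ b x, (σt b x).trace = (t b x : ℂ) := fun b x => psd_trace_real (hpsd b x)
  have htnn : ∀ b x, 0 ≤ t b x := by
    intro b x
    have h := psd_trace_nonneg (hpsd b x)
    rw [Complex.nonneg_iff] at h
    exact h.1
  have htsum : ∀ x, ∑ b, t b x = 1 := by
    intro x
    have h := hnorm x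
    rw [Fin.sum_univ_two, htr, htr] at h
    have : ((t 0 x + t 1 x : ℝ) : ℂ) = ((1 : ℝ) : ℂ) := by push_cast; simpa using h
    rw [Fin.sum_univ_two]
    exact_mod_cast this
  -- the equivalence Fin 2 × Fin 2 ≃ Fin 4
  let e : Fin 2 × Fin 2 ≃ Fin 4 := finProdFinEquiv
  -- local hidden states indexed by pairs
  let ρp : Fin 2 × Fin 2 → Matrix (Fin 2) (Fin 2) ℂ := fun p =>
    if t p.1 p.2 = 0 then (1 / 2 : ℝ) • (1 : Matrix (Fin 2) (Fin 2) ℂ)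
    else (t p.1 p.2)⁻¹ • σt p.1 p.2
  refine ⟨4, fun l => (1 / 2) * t (e.symm l).1 (e.symm l).2,
    fun l => ρp (e.symm l),
    fun a b x y l => if e.symm l = (b, x + a + y) then 1 else 0,
    ?_, ?_, ?_, ?_, ?_, ?_, ?_⟩
  · intro l
    exact mul_nonneg (by norm_num) (htnn _ _)
  · rw [← Equiv.sum_comp e (fun l => (1 / 2 : ℝ) * t (e.symm l).1 (e.symm l).2)]
    simp only [Equiv.symm_apply_apply]
    rw [Fintype.sum_prod_type, ← Finset.sum_comm]
    have : ∀ x : Fin 2, ∑ b : Fin 2, (1 / 2 : ℝ) * t b x = 1 / 2 := by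
      intro x
      rw [← Finset.mul_sum, htsum x, mul_one]
    rw [Fin.sum_univ_two]
    simp only [this]
    norm_num
  · intro l
    by_cases h : t (e.symm l).1 (e.symm l).2 = 0
    · simp only [ρp, h, if_pos rfl]
      exact psd_smul_real Matrix.PosSemidef.one (by norm_num)
    · simp only [ρp, h, if_neg h]
      exact psd_smul_real (hpsd _ _) (inv_nonneg.mpr (htnn _ _))
  · intro l
    by_cases h : t (e.symm l).1 (e.symm l).2 = 0
    · have hh : ρp (e.symm l) = (1 / 2 : ℝ) • (1 : Matrix (Fin 2) (Fin 2) ℂ) := by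
        simp only [ρp, if_pos h]
      show (ρp (e.symm l)).trace = 1
      rw [hh, Matrix.trace_smul, Matrix.trace_one]
      simp [Complex.real_smul]
    · show (ρp (e.symm l)).trace = 1
      simp only [ρp, if_neg h]
      rw [Matrix.trace_smul, htr]
      rw [Complex.real_smul]
      rw [← Complex.ofReal_mul, inv_mul_cancel₀ h]
      norm_num
  · intro a b x y l
    dsimp only
    split <;> norm_num
  · intro x y l
    obtain ⟨p, rfl⟩ := e.surjective l
    simp only [Equiv.symm_apply_apply]
    obtain ⟨p1, p2⟩ := p
    fin_cases p1 <;> fin_cases p2 <;> fin_cases x <;> fin_cases y <;>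
      simp [Fin.sum_univ_two, Prod.ext_iff] <;> decide
  · intro a b x y
    rw [← Equiv.sum_comp e]
    simp only [Equiv.symm_apply_apply]
    have key : ∀ p : Fin 2 × Fin 2,
        ((1 / 2 : ℝ) * t p.1 p.2 * (if p = (b, x + a + y) then (1:ℝ) else 0)) • ρp p =
        if p = (b, x + a + y) then ((1 / 2 : ℝ) * t p.1 p.2) • ρp p else 0 := by
      intro p; split <;> simp
    simp only [key]
    rw [Finset.sum_ite_eq' Finset.univ (b, x + a + y)
      (fun p => ((1 / 2 : ℝ) * t p.1 p.2) • ρp p)]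
    simp only [Finset.mem_univ, if_pos]
    by_cases h : t b (x + a + y) = 0
    · have hz : σt b (x + a + y) = 0 := by
        apply psd_eq_zero_of_trace_zero (hpsd _ _)
        rw [htr]; exact_mod_cast h
      simp [ρp, h, hz]
    · simp only [ρp, if_neg h]
      rw [smul_smul]
      rw [mul_assoc, mul_inv_cancel₀ h, mul_one]
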